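/- arXiv:2106.16015 — 7 statements merged into one kernel-verified Lean document; each statement's English description precedes it below -/
import Mathlib

section
/- Let G be a 2-connected finite simple graph on vertex set V with |V| ≥ 3, and let S ⊆ V. Then G contains no odd S-cycle if and only if S = ∅ or G is bipartite. -/
/-!
Every vertex of a 2-connected non-bipartite graph lies on an odd cycle. Indeed, let `C` be an
odd cycle through `u` and let `v` be a neighbour of `u`. Since `G - u` is connected, some path `P`
leads from `v` to `C` avoiding `u`, meeting `C` only at its end `w ≠ u`. The two arcs of `C`
between `w` and `u` have lengths of different parity, so one of them closes `u v P` into an odd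
cycle through `v`. Propagating along a walk spreads odd cycles to every vertex.
-/

open SimpleGraph

/-- A finite simple graph is 2-connected if it has at least 3 vertices, is connected,
and deleting any single vertex leaves a connected graph. -/
def TwoConnected {V : Type*} [Fintype V] (G : SimpleGraph V) : Prop :=
  3 ≤ Fintype.card V ∧ G.Connected ∧
    ∀ v : V, (G.induce {w : V | w ≠ v}).Connected

namespace SimpleGraph

variable {V : Type*} {G : SimpleGraph V}

namespace Walk

theorem exists_eq_append_of_not_isPath {u v : V} (p : G.Walk u v) (hp : ¬p.IsPath) :
    ∃ (x : V) (q : G.Walk u x) (c : G.Walk x x) (r : G.Walk x v),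
      ¬c.Nil ∧ p = q.append (c.append r) := by
  classical
  induction p with
  | nil => exact absurd IsPath.nil hp
  | @cons u u' v h p ih =>
    by_cases hu : u ∈ p.support
    · refine ⟨u, nil, cons h (p.takeUntil u hu), p.dropUntil u hu, not_nil_cons, ?_⟩
      rw [nil_append, cons_append, p.take_spec hu]
    · obtain ⟨x, q, c, r, hc, rfl⟩ := ih fun hp' => hp (hp'.cons hu)
      exact ⟨x, cons h q, c, r, hc, rfl⟩

theorem exists_isCycle_odd_length {u : V} (w : G.Walk u u) (hw : Odd w.length) :
    ∃ (v : V) (c : G.Walk v v), c.IsCycle ∧ Odd c.length := by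
  induction hn : w.length using Nat.strong_induction_on generalizing u with
  | _ n ih =>
    cases w with
    | nil => simp at hw
    | @cons u y _ h T =>
      by_cases hT : T.IsPath
      · have hT0 : T.length ≠ 0 := fun h0 => h.ne (eq_of_length_eq_zero h0).symm
        refine ⟨u, cons h T, isCycle_iff_isPath_tail_and_le_length.mpr ⟨by simpa, ?_⟩, hw⟩
        simp only [length_cons, Nat.odd_iff] at hw ⊢
        omega
      · -- `T` splits off a closed walk `c`; `c` or the rest is a shorter odd closed walk
        obtain ⟨x, q, c, r, hc, rfl⟩ := T.exists_eq_append_of_not_isPath hT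
        have hc0 : 0 < c.length := not_nil_iff_lt_length.mp hc
        simp only [length_cons, length_append] at hw hn
        by_cases hco : Odd c.length
        · exact ih c.length (by omega) c hco rfl
        · refine ih _ ?_ (cons h (q.append r)) ?_ rfl <;>
            simp only [length_cons, length_append, Nat.odd_iff] at hco hw ⊢ <;> omega

theorem exists_prefix_first_mem {s : Set V} {v x : V} (q : G.Walk v x) (hx : x ∈ s) :
    ∃ w ∈ s, ∃ P : G.Walk v w, P.support ⊆ q.support ∧ ∀ z ∈ P.support, z ∈ s → z = w := by
  induction q with
  | nil => exact ⟨_, hx, nil, List.Subset.refl _, by simp⟩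
  | @cons v v' x h q ih =>
    by_cases hv : v ∈ s
    · exact ⟨v, hv, nil, by simp, by simp⟩
    · obtain ⟨w, hw, P, hPq, hPs⟩ := ih hx
      refine ⟨w, hw, cons h P, ?_, ?_⟩
      · simpa using List.cons_subset_cons v hPq
      · rintro z hz hzs
        rw [support_cons, List.mem_cons] at hz
        rcases hz with rfl | hz
        · exact absurd hzs hv
        · exact hPs z hz hzs

end Walk

theorem colorable_two_iff_forall_isCycle_even :
    G.Colorable 2 ↔ ∀ (u : V) (c : G.Walk u u), c.IsCycle → Even c.length := by
  refine ⟨fun h u c _ => two_colorable_iff_forall_loop_even.mp h u c, fun h => ?_⟩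
  refine two_colorable_iff_forall_loop_even.mpr fun u w => ?_
  by_contra hw
  obtain ⟨v, c, hc, hodd⟩ := w.exists_isCycle_odd_length (Nat.not_even_iff_odd.mp hw)
  exact Nat.not_even_iff_odd.mpr hodd (h v c hc)

def LiesOnOddCycle (G : SimpleGraph V) (v : V) : Prop :=
  ∃ (a : V) (c : G.Walk a a), c.IsCycle ∧ Odd c.length ∧ v ∈ c.support

theorem liesOnOddCycle_of_isPath_to_cycle {u v w : V} {C : G.Walk u u} (hC : C.IsCycle)
    (hodd : Odd C.length) (huv : G.Adj u v) {P : G.Walk v w} (hP : P.IsPath)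
    (hwC : w ∈ C.support) (hwu : w ≠ u) (hPC : ∀ z ∈ P.support, z ∈ C.support → z = w) :
    G.LiesOnOddCycle v := by
  classical
  have hspec := C.take_spec hwC
  set T := C.takeUntil w hwC
  set D := C.dropUntil w hwC
  have hT : T.IsPath := hC.isPath_takeUntil hwC
  have hD : D.IsPath := (hspec ▸ hC).isPath_of_append_right (Walk.not_nil_of_ne hwu.symm)
  have hlen : T.length + D.length = C.length := by rw [← hspec, Walk.length_append]
  -- the arcs `T` and `D` of `C` have lengths of different parity
  obtain ⟨A, hA, hAC, hpar⟩ : ∃ A : G.Walk w u,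
      A.IsPath ∧ A.support ⊆ C.support ∧ Even (P.length + A.length) := by
    by_cases hPD : Even (P.length + D.length)
    · exact ⟨D, hD, C.support_dropUntil_subset_support hwC, hPD⟩
    · refine ⟨T.reverse, hT.reverse, by simpa using C.support_takeUntil_subset_support hwC, ?_⟩
      rw [Walk.length_reverse]
      grind
  have huP : u ∉ P.support := fun hu => hwu (hPC u hu C.start_mem_support).symm
  have hA0 : A.length ≠ 0 := fun h0 => hwu (Walk.eq_of_length_eq_zero h0)
  have hwA : w ∉ A.support.tail := by
    have := hA.support_nodup
    rw [← Walk.cons_tail_support, List.nodup_cons] at this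
    exact this.1
  refine ⟨u, (Walk.cons huv P).append A, (hP.cons huP).isCycle_append hA ?_ ?_, ?_, by simp⟩
  · intro z hzP hzA
    simp only [Walk.support_cons, List.tail_cons] at hzP
    exact hwA (hPC z hzP (hAC (List.mem_of_mem_tail hzA)) ▸ hzA)
  · simp only [Walk.length_cons]
    grind
  · rw [Walk.length_append, Walk.length_cons, add_right_comm]
    exact hpar.add_one

theorem LiesOnOddCycle.of_adj {u v : V} (hu : G.LiesOnOddCycle u) (huv : G.Adj u v)
    (hdel : (G.induce {w | w ≠ u}).Preconnected) : G.LiesOnOddCycle v := by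
  classical
  obtain ⟨a, c, hc, hodd, hu⟩ := hu
  set C := c.rotate u hu
  have hC : C.IsCycle := hc.rotate hu
  obtain ⟨q⟩ := hdel ⟨v, huv.ne'⟩ ⟨C.snd, (C.adj_snd hC.not_nil).ne'⟩
  set q' := q.map (Embedding.induce {w | w ≠ u}).toHom
  have huq : u ∉ q'.support := by
    simp only [q', Walk.support_map, List.mem_map, not_exists, not_and]
    exact fun z _ hz => z.2 hz
  obtain ⟨w, hwC, P, hPq, hPC⟩ := q'.exists_prefix_first_mem (s := {z | z ∈ C.support}) (by simp)
  have huP : u ∉ P.bypass.support := fun h => huq (hPq (P.support_bypass_subset_support h))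
  exact liesOnOddCycle_of_isPath_to_cycle hC (by simpa [C] using hodd) huv P.bypass_isPath hwC
    (fun h => huP (h ▸ P.bypass.end_mem_support))
    (fun z hz => hPC z (P.support_bypass_subset_support hz))

theorem LiesOnOddCycle.of_reachable (hdel : ∀ u, (G.induce {w | w ≠ u}).Preconnected)
    {u v : V} (hu : G.LiesOnOddCycle u) (huv : G.Reachable u v) : G.LiesOnOddCycle v := by
  obtain ⟨p⟩ := huv
  induction p with
  | nil => exact hu
  | cons h p ih => exact ih (hu.of_adj h (hdel _))

end SimpleGraph

/-- A 2-connected graph on at least 3 vertices contains no odd `S`-cycle iff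
`S = ∅` or `G` is bipartite (properly 2-colorable). -/
theorem stmt2 {V : Type*} [Fintype V] (G : SimpleGraph V)
    (hG : TwoConnected G) (S : Set V) :
    (¬ ∃ (a : V) (c : G.Walk a a), c.IsCycle ∧ Odd c.length ∧ ∃ w ∈ S, w ∈ c.support) ↔
      (S = ∅ ∨ G.Colorable 2) := by
  obtain ⟨-, hconn, hdel⟩ := hG
  constructor
  · intro hS
    by_contra! ⟨⟨s, hs⟩, hcol⟩
    simp only [colorable_two_iff_forall_isCycle_even, not_forall, Nat.not_even_iff_odd] at hcol
    obtain ⟨u, c, hc, hodd⟩ := hcol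
    have hu : G.LiesOnOddCycle u := ⟨u, c, hc, hodd, c.start_mem_support⟩
    obtain ⟨a, c', hc', hodd', hsc'⟩ :=
      hu.of_reachable (fun v => (hdel v).preconnected) (hconn.preconnected u s)
    exact hS ⟨a, c', hc', hodd', s, hs, hsc'⟩
  · rintro (rfl | hcol) ⟨a, c, hc, hodd, w, hw, -⟩
    · exact hw
    · exact Nat.not_even_iff_odd.mpr hodd (colorable_two_iff_forall_isCycle_even.mp hcol a c hc)
end

section
/- Let G be a finite simple graph, S a set of vertices of G, and let u and v be two distinct vertices joined by three pairwise internally vertex-disjoint paths P1, P2, P3 such that at least two of these paths contain a vertex of S. Then two of the three paths together form a cycle of even length containing a vertex of S. -/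
/-!
Two of the three path lengths have the same parity, so those two paths close up to an even cycle;
it is a cycle because the paths are distinct and meet only at their ends. Any two pairs of indices
in `Fin 3` share an index, so this pair contains one of the two paths through `S`.
-/

open SimpleGraph

namespace SimpleGraph.Walk

variable {V : Type*} {G : SimpleGraph V} {u v : V}

lemma IsPath.isCycle_append_reverse {p q : G.Walk u v} (hp : p.IsPath) (hq : q.IsPath)
    (hne : p ≠ q) (hint : ∀ w ∈ p.support, w ∈ q.support → w = u ∨ w = v) :
    (p.append q.reverse).IsCycle := by
  refine hp.isCycle_append hq.reverse ?_ ?_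
  · intro w hwp hwq
    have hu : u ∉ p.support.tail := (p.cons_tail_support ▸ hp.support_nodup).notMem
    have hv : v ∉ q.reverse.support.tail :=
      (q.reverse.cons_tail_support ▸ hq.reverse.support_nodup).notMem
    have hwq' : w ∈ q.support := by
      simpa using List.mem_of_mem_tail hwq
    rcases hint w (List.mem_of_mem_tail hwp) hwq' with rfl | rfl
    · exact hu hwp
    · exact hv hwq
  · by_contra! h
    exact hne (eq_of_length_le_one h.1 (by simpa using h.2))

end SimpleGraph.Walk

lemma exists_ne_even_add_of_two_lt_card {ι : Type*} [Fintype ι] (hι : 2 < Fintype.card ι)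
    (f : ι → ℕ) : ∃ i j, i ≠ j ∧ Even (f i + f j) := by
  obtain ⟨i, j, hij, h⟩ :=
    Fintype.exists_ne_map_eq_of_card_lt (fun i => decide (Even (f i))) (by simpa using hι)
  exact ⟨i, j, hij, Nat.even_add.2 (by simpa using h)⟩

lemma Fin.three_pairs_meet {a b i j : Fin 3} (hab : a ≠ b) (hij : i ≠ j) :
    a = i ∨ a = j ∨ b = i ∨ b = j := by
  revert a b i j; decide

theorem stmt4_general {V : Type*} (G : SimpleGraph V) (S : Set V)
    {u v : V} (P : Fin 3 → G.Walk u v)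
    (hpath : ∀ i, (P i).IsPath)
    (hdist : ∀ i j, i ≠ j → P i ≠ P j)
    (hint : ∀ i j, i ≠ j → ∀ w : V, w ∈ (P i).support → w ∈ (P j).support → w = u ∨ w = v)
    (hS : ∃ i j, i ≠ j ∧ (∃ w ∈ S, w ∈ (P i).support) ∧ (∃ w ∈ S, w ∈ (P j).support)) :
    ∃ i j, i ≠ j ∧ ((P i).append (P j).reverse).IsCycle ∧
      Even ((P i).append (P j).reverse).length ∧
      ∃ w ∈ S, w ∈ ((P i).append (P j).reverse).support := by
  obtain ⟨a, b, hab, ⟨wa, hwaS, hwa⟩, ⟨wb, hwbS, hwb⟩⟩ := hS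
  obtain ⟨i, j, hij, heven⟩ := exists_ne_even_add_of_two_lt_card (by simp) fun k => (P k).length
  refine ⟨i, j, hij, (hpath i).isCycle_append_reverse (hpath j) (hdist i j hij) (hint i j hij),
    by simpa using heven, ?_⟩
  rcases Fin.three_pairs_meet hab hij with rfl | rfl | rfl | rfl
  · exact ⟨wa, hwaS, by simp [hwa]⟩
  · exact ⟨wa, hwaS, by simp [hwa]⟩
  · exact ⟨wb, hwbS, by simp [hwb]⟩
  · exact ⟨wb, hwbS, by simp [hwb]⟩

/-- If two distinct vertices `u`, `v` are joined by three pairwise internally vertex-disjoint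
(pairwise distinct) paths, at least two of which contain a vertex of `S`, then two of the
three paths together form an even cycle containing a vertex of `S`. -/
theorem stmt4 {V : Type*} [Fintype V] (G : SimpleGraph V) (S : Set V)
    {u v : V} (huv : u ≠ v) (P : Fin 3 → G.Walk u v)
    (hpath : ∀ i, (P i).IsPath)
    (hdist : ∀ i j, i ≠ j → P i ≠ P j)
    (hint : ∀ i j, i ≠ j → ∀ w : V, w ∈ (P i).support → w ∈ (P j).support → w = u ∨ w = v)
    (hS : ∃ i j, i ≠ j ∧ (∃ w ∈ S, w ∈ (P i).support) ∧ (∃ w ∈ S, w ∈ (P j).support)) :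
    ∃ i j, i ≠ j ∧ ((P i).append (P j).reverse).IsCycle ∧
      Even ((P i).append (P j).reverse).length ∧
      ∃ w ∈ S, w ∈ ((P i).append (P j).reverse).support :=
  stmt4_general G S P hpath hdist hint hS
end

section
/- Let G be a finite simple graph and say that two edges e and f of G lie in a common block if e = f or some cycle of G contains both e and f. Let W be a closed walk in G, with edge sequence e_1, e_2, …, e_m (indices taken cyclically), such that for every vertex v of G there is at most one cyclic index i for which e_i and e_{i+1} meet at v and do not lie in a common block. Then all edges of W pairwise lie in a common block. -/
open SimpleGraph

/-- Two edges `e` and `f` of `G` lie in a common block if `e = f` or some cycle of `G`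
contains both. -/
def InCommonBlock {V : Type*} (G : SimpleGraph V) (e f : Sym2 V) : Prop :=
  e = f ∨ ∃ (a : V) (c : G.Walk a a), c.IsCycle ∧ e ∈ c.edges ∧ f ∈ c.edges

/-!
Lying in a common block is an equivalence relation on edges. For transitivity, let `e, f` lie
on a cycle `C` and `f, g = s(u, w)` on a cycle `D`, with `g ∉ C`: the path `D - g` from `w` to
`u` passes through `f`, hence meets `C`; leaving it at its first vertex on `C` and rejoining it
at its last, along the arc of `C` through `e`, gives a path from `w` to `u` avoiding `g` and
closing a cycle through `e` and `g`.

It therefore suffices that cyclically consecutive edges `e_i, e_{i+1}` of `W` lie in a common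
block. Otherwise they meet at a vertex `c`, and at every other visit of `W` to `c` the two
edges do lie in a common block. Read `W` as a closed walk from `c` that starts with `e_{i+1}`
and ends with `e_i`: each excursion from `c` back to `c` starts and ends with edges lying on a
common cycle (or equal), and consecutive excursions meet at one of those other visits, so
`e_{i+1}` and `e_i` lie in a common block after all.
-/

lemma List.isChain_rotate_of_forall_ne {α : Type*} {R : α → α → Prop} {l : List α}
    (i : Fin l.length)
    (h : ∀ j : Fin l.length, j ≠ i →
      R (l.get j) (l.get ⟨(j + 1) % l.length, Nat.mod_lt _ j.pos⟩)) :
    (l.rotate (i + 1)).IsChain R := by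
  refine List.isChain_iff_getElem.2 fun k hk => ?_
  rw [List.length_rotate] at hk
  have hne : (k + (i + 1)) % l.length ≠ i := by
    rcases Nat.lt_or_ge (k + (i + 1)) l.length with hlt | hge
    · rw [Nat.mod_eq_of_lt hlt]; omega
    · rw [Nat.mod_eq_sub_mod hge, Nat.mod_eq_of_lt (by omega)]; omega
  simpa [List.getElem_rotate, Nat.mod_add_mod, Nat.add_right_comm] using
    h ⟨_, Nat.mod_lt _ i.pos⟩ (Fin.ne_of_val_ne hne)

namespace SimpleGraph.Walk

variable {V : Type*} {G : SimpleGraph V}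

lemma IsCycle.snd_eq_or_penultimate_eq {u w : V} {c : G.Walk u u} (hc : c.IsCycle)
    (he : s(u, w) ∈ c.edges) : c.snd = w ∨ c.penultimate = w := by
  cases c with
  | nil => simp at he
  | cons h q =>
    obtain ⟨hq, -⟩ := (cons_isCycle_iff q h).1 hc
    rcases List.mem_cons.1 (edges_cons h q ▸ he) with he | he
    · exact Or.inl (snd_cons q h ▸ Sym2.congr_right.1 he).symm
    · have hnil : ¬q.Nil := edges_eq_nil.not.mp (List.ne_nil_of_mem he)
      rw [penultimate_cons_of_not_nil _ _ hnil]
      exact Or.inr (hq.eq_penultimate_of_mem_edges he).symm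

lemma IsCycle.exists_isPath_of_mk_mem_edges {x u w : V} {c : G.Walk x x} (hc : c.IsCycle)
    (he : s(u, w) ∈ c.edges) :
    ∃ (_ : G.Adj u w) (q : G.Walk w u), q.IsPath ∧ s(u, w) ∉ q.edges ∧
      c.edges ⊆ s(u, w) :: q.edges := by
  classical
  have hu := c.fst_mem_support_of_mem_edges he
  obtain ⟨d, hd, hdw, hsub⟩ : ∃ d : G.Walk u u, d.IsCycle ∧ d.snd = w ∧ c.edges ⊆ d.edges := by
    have hsub : c.edges ⊆ (c.rotate u hu).edges := fun e he => (c.rotate_edges u hu).mem_iff.2 he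
    rcases (hc.rotate hu).snd_eq_or_penultimate_eq (hsub he) with hw | hw
    · exact ⟨_, hc.rotate hu, hw, hsub⟩
    · exact ⟨_, (hc.rotate hu).reverse, by rwa [snd_reverse], fun e he => by simpa using hsub he⟩
  subst hdw
  have hnil := hd.not_nil
  rw [← d.cons_tail_eq hnil] at hd hsub
  exact ⟨d.adj_snd hnil, d.tail, ((cons_isCycle_iff _ _).1 hd).1, ((cons_isCycle_iff _ _).1 hd).2,
    hsub⟩

lemma IsCycle.exists_isPath_of_mem_support {x z₁ z₂ : V} {c : G.Walk x x} (hc : c.IsCycle)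
    {e : Sym2 V} (he : e ∈ c.edges) (h₁ : z₁ ∈ c.support) (h₂ : z₂ ∈ c.support) (hne : z₁ ≠ z₂) :
    ∃ p : G.Walk z₁ z₂, p.IsPath ∧ e ∈ p.edges ∧ (∀ v ∈ p.support, v ∈ c.support) ∧
      ∀ f ∈ p.edges, f ∈ c.edges := by
  classical
  set d := c.rotate z₁ h₁
  have hd : d.IsCycle := hc.rotate h₁
  have hsupp : ∀ v, v ∈ d.support → v ∈ c.support := fun v => (c.mem_support_rotate_iff z₁ h₁).1
  have hedges : ∀ f, f ∈ d.edges ↔ f ∈ c.edges := fun f => (c.rotate_edges z₁ h₁).mem_iff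
  have h₂' : z₂ ∈ d.support := (c.mem_support_rotate_iff z₁ h₁).2 h₂
  have hspec := d.take_spec h₂'
  rw [← hedges, ← hspec, edges_append, List.mem_append] at he
  rcases he with he | he
  · exact ⟨_, hd.isPath_takeUntil h₂', he,
      fun v hv => hsupp v (d.support_takeUntil_subset_support h₂' hv),
      fun f hf => (hedges f).1 (d.edges_takeUntil_subset_edges h₂' hf)⟩
  · have hD : (d.dropUntil z₂ h₂').IsPath :=
      (hspec ▸ hd).isPath_of_append_right (not_nil_of_ne hne)
    refine ⟨_, hD.reverse, by simpa using he, fun v hv => ?_, fun f hf => ?_⟩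
    · rw [support_reverse, List.mem_reverse] at hv
      exact hsupp v (d.support_dropUntil_subset_support h₂' hv)
    · rw [edges_reverse, List.mem_reverse] at hf
      exact (hedges f).1 (d.edges_dropUntil_subset_edges h₂' hf)

lemma exists_eq_append_of_exists_mem_support (S : Set V) {x y : V} (p : G.Walk x y)
    (hS : ∃ v ∈ p.support, v ∈ S) :
    ∃ (z : V) (p₁ : G.Walk x z) (p₂ : G.Walk z y), z ∈ S ∧ p = p₁.append p₂ ∧
      ∀ v ∈ p₁.support, v ∈ S → v = z := by
  induction p with
  | nil =>
    obtain ⟨v, hv, hvS⟩ := hS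
    rw [support_nil, List.mem_singleton] at hv
    subst hv
    exact ⟨_, nil, nil, hvS, rfl, by simp⟩
  | @cons x _ _ h q ih =>
    by_cases hx : x ∈ S
    · exact ⟨x, nil, cons h q, hx, rfl, by simp⟩
    · obtain ⟨z, q₁, q₂, hz, rfl, hq₁⟩ := ih (by simpa [hx] using hS)
      refine ⟨z, cons h q₁, q₂, hz, rfl, ?_⟩
      simp only [support_cons, List.mem_cons, forall_eq_or_imp]
      exact ⟨fun hxS => absurd hxS hx, hq₁⟩

lemma IsPath.append {u v w : V} {p : G.Walk u v} {q : G.Walk v w} (hp : p.IsPath) (hq : q.IsPath)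
    (hpq : ∀ x ∈ p.support, x ∈ q.support → x = v) : (p.append q).IsPath := by
  have hv : v ∉ q.support.tail := by
    have := hq.support_nodup
    rw [← q.cons_tail_support, List.nodup_cons] at this
    exact this.1
  rw [isPath_def, support_append]
  exact hp.support_nodup.append hq.support_nodup.tail fun x hx hx' =>
    hv (hpq x hx (List.mem_of_mem_tail hx') ▸ hx')

lemma mk_notMem_edges_of_forall_mem_support {x y z a b : V} {S : Set V} {p : G.Walk x y}
    (hp : ∀ v ∈ p.support, v ∈ S → v = z) (ha : a ∈ S) (hb : b ∈ S) (hab : a ≠ b) :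
    s(a, b) ∉ p.edges := fun he =>
  hab <| (hp a (p.fst_mem_support_of_mem_edges he) ha).trans
    (hp b (p.snd_mem_support_of_mem_edges he) hb).symm

lemma IsPath.exists_eq_append_append_of_mk_mem_edges {u w a b : V} {S : Set V}
    {q : G.Walk w u} (hq : q.IsPath) (hab : s(a, b) ∈ q.edges) (ha : a ∈ S) (hb : b ∈ S) :
    ∃ (z₁ z₂ : V) (A : G.Walk w z₁) (M : G.Walk z₁ z₂) (B : G.Walk z₂ u),
      z₁ ∈ S ∧ z₂ ∈ S ∧ z₁ ≠ z₂ ∧ q = (A.append M).append B ∧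
      (∀ v ∈ A.support, v ∈ S → v = z₁) ∧ ∀ v ∈ B.support, v ∈ S → v = z₂ := by
  have hne : a ≠ b := (q.adj_of_mem_edges hab).ne
  obtain ⟨z₁, A, D, hz₁, rfl, hA⟩ :=
    q.exists_eq_append_of_exists_mem_support S ⟨a, q.fst_mem_support_of_mem_edges hab, ha⟩
  have hD : s(a, b) ∈ D.edges := by
    rw [edges_append, List.mem_append] at hab
    exact hab.resolve_left (mk_notMem_edges_of_forall_mem_support hA ha hb hne)
  obtain ⟨z₂, B, E, hz₂, hDBE, hB⟩ := D.reverse.exists_eq_append_of_exists_mem_support S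
    ⟨a, by simpa using D.fst_mem_support_of_mem_edges hD, ha⟩
  have hED : E.reverse.append B.reverse = D := by rw [← reverse_append, ← hDBE, reverse_reverse]
  refine ⟨z₁, z₂, A, E.reverse, B.reverse, hz₁, hz₂, ?_, by rw [← append_assoc, hED], hA,
    by simpa using hB⟩
  rintro rfl
  have hDr : (B.append E).IsPath := hDBE ▸ hq.of_append_right.reverse
  obtain rfl : E = Walk.nil := eq_nil_iff_nil.2 (isPath_iff_nil.1 hDr.of_append_right)
  refine mk_notMem_edges_of_forall_mem_support hB ha hb hne ?_
  rw [← append_nil B, ← hDBE, edges_reverse, List.mem_reverse]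
  exact hD

lemma IsPath.exists_isPath_mem_edges_of_isCycle {x u w : V} {q : G.Walk w u} (hq : q.IsPath)
    {c : G.Walk x x} (hc : c.IsCycle) {e f : Sym2 V} (hfq : f ∈ q.edges) (hfc : f ∈ c.edges)
    (hec : e ∈ c.edges) :
    ∃ p : G.Walk w u, p.IsPath ∧ e ∈ p.edges ∧ ∀ g ∈ p.edges, g ∈ q.edges ∨ g ∈ c.edges := by
  induction f using Sym2.ind with | _ a b => ?_
  obtain ⟨z₁, z₂, A, M, B, hz₁, hz₂, hz, rfl, hA, hB⟩ :=
    hq.exists_eq_append_append_of_mk_mem_edges (S := {v | v ∈ c.support}) hfq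
      (c.fst_mem_support_of_mem_edges hfc) (c.snd_mem_support_of_mem_edges hfc)
  obtain ⟨arc, harc, hearc, harcS, harcc⟩ := hc.exists_isPath_of_mem_support hec hz₁ hz₂ hz
  refine ⟨(A.append arc).append B, ?_, by simp [hearc], fun g hg => ?_⟩
  · have hAarc := hq.of_append_left.of_append_left.append harc fun v hvA hv =>
      hA v hvA (harcS v hv)
    refine hAarc.append hq.of_append_right fun v hv hvB => ?_
    rcases (mem_support_append_iff _ _).1 hv with hvA | hvarc
    · by_contra hvz
      exact hq.ne_of_mem_support_of_append hvz ((mem_support_append_iff _ _).2 (Or.inl hvA)) hvB rfl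
    · exact hB v hvB (harcS v hvarc)
  · simp only [edges_append, List.mem_append] at hg ⊢
    rcases hg with (hg | hg) | hg
    · exact Or.inl (Or.inl (Or.inl hg))
    · exact Or.inr (harcc g hg)
    · exact Or.inl (Or.inr hg)

end SimpleGraph.Walk

namespace InCommonBlock

variable {V : Type*} {G : SimpleGraph V} {e f g : Sym2 V}

@[refl]
protected lemma refl (e : Sym2 V) : InCommonBlock G e e := Or.inl rfl

protected lemma symm (h : InCommonBlock G e f) : InCommonBlock G f e := by
  rcases h with rfl | ⟨a, c, hc, he, hf⟩
  · exact .refl _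
  · exact Or.inr ⟨a, c, hc, hf, he⟩

protected lemma trans (hef : InCommonBlock G e f) (hfg : InCommonBlock G f g) :
    InCommonBlock G e g := by
  rcases hef with rfl | ⟨x, c₁, hc₁, he₁, hf₁⟩
  · exact hfg
  rcases hfg with rfl | ⟨y, c₂, hc₂, hf₂, hg₂⟩
  · exact Or.inr ⟨x, c₁, hc₁, he₁, hf₁⟩
  by_cases hg₁ : g ∈ c₁.edges
  · exact Or.inr ⟨x, c₁, hc₁, he₁, hg₁⟩
  induction g using Sym2.ind with | _ u w => ?_
  obtain ⟨h, q, hq, hgq, hsub⟩ := hc₂.exists_isPath_of_mk_mem_edges hg₂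
  have hfq : f ∈ q.edges :=
    (List.mem_cons.1 (hsub hf₂)).resolve_left fun hfg => hg₁ (hfg ▸ hf₁)
  obtain ⟨p, hp, hep, hpsub⟩ := hq.exists_isPath_mem_edges_of_isCycle hc₁ hfq hf₁ he₁
  refine Or.inr ⟨u, .cons h p, (Walk.cons_isCycle_iff p h).2 ⟨hp, fun hgp => ?_⟩, by simp [hep],
    by simp⟩
  exact (hpsub _ hgp).elim hgq hg₁

instance : Std.Symm (InCommonBlock G) := ⟨fun _ _ => InCommonBlock.symm⟩

instance : Trans (InCommonBlock G) (InCommonBlock G) (InCommonBlock G) := ⟨InCommonBlock.trans⟩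

end InCommonBlock

namespace SimpleGraph.Walk

variable {V : Type*} {G : SimpleGraph V}

lemma exists_eq_cons_concat_append {v : V} (p : G.Walk v v) (hp : ¬p.Nil) :
    ∃ (a b : V) (h : G.Adj v a) (r : G.Walk a b) (h' : G.Adj b v) (q : G.Walk v v),
      v ∉ r.support ∧ p = (cons h (r.concat h')).append q := by
  classical
  cases p with
  | nil => simp at hp
  | cons h p =>
    have hv := p.end_mem_support
    have hA : ¬(p.takeUntil _ hv).Nil := not_nil_of_ne h.ne.symm
    refine ⟨_, _, h, _, adj_penultimate hA, p.dropUntil _ hv, fun hvA => ?_, by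
      rw [concat_dropLast, cons_append, take_spec]⟩
    have := p.count_support_takeUntil_eq_one hv
    rw [← support_dropLast_concat hA, List.count_append] at this
    exact List.count_eq_zero.1 (by simpa using this) hvA

lemma inCommonBlock_of_notMem_support {v a b : V} (h : G.Adj v a) (r : G.Walk a b)
    (h' : G.Adj b v) (hr : v ∉ r.support) : InCommonBlock G s(v, a) s(b, v) := by
  classical
  by_cases hab : a = b
  · subst hab
    exact Or.inl Sym2.eq_swap
  have hvr : v ∉ r.bypass.support := fun hv => hr (r.support_bypass_subset_support hv)
  refine Or.inr ⟨v, cons h (r.bypass.concat h'),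
    (cons_isCycle_iff _ h).2 ⟨r.bypass_isPath.concat hvr h', ?_⟩, by simp, by simp⟩
  rw [edges_concat, List.concat_eq_append, List.mem_append, List.mem_singleton]
  rintro (hmem | heq)
  · exact hvr (r.bypass.fst_mem_support_of_mem_edges hmem)
  · rcases Sym2.eq_iff.1 heq with ⟨-, hav⟩ | ⟨-, hab'⟩
    · exact h.ne hav.symm
    · exact hab hab'

theorem inCommonBlock_snd_of_isChain {v : V} (p : G.Walk v v)
    (hp : p.edges.IsChain fun e f => v ∈ e → v ∈ f → InCommonBlock G e f) {e : Sym2 V}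
    (he : e ∈ p.edges) (hv : v ∈ e) : InCommonBlock G s(v, p.snd) e := by
  induction hn : p.length using Nat.strong_induction_on generalizing p with | _ n ih => ?_
  obtain ⟨a, b, h, r, h', q, hr, rfl⟩ :=
    p.exists_eq_cons_concat_append (edges_eq_nil.not.mp (List.ne_nil_of_mem he))
  have hexc := inCommonBlock_of_notMem_support h r h' hr
  simp only [cons_append, snd_cons, edges_cons, edges_append, edges_concat, List.concat_eq_append,
    List.mem_cons, List.mem_append, List.append_assoc, List.singleton_append] at he hp ⊢
  rcases he with rfl | he | rfl | he
  · rfl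
  · exact absurd (mem_support_of_mem_edges he hv) hr
  · exact hexc
  · cases q with
    | nil => simp at he
    | cons h'' q =>
      rw [edges_cons, List.isChain_cons_append_cons_cons] at hp
      have hq := ih _ (by simp [← hn]) (cons h'' q) (by simpa using hp.2.2) he rfl
      rw [snd_cons] at hq
      exact hexc.trans ((hp.2.1 (Sym2.mem_mk_right _ _) (Sym2.mem_mk_left _ _)).trans hq)

lemma exists_edges_eq_rotate {u : V} (p : G.Walk u u) (n : ℕ) :
    ∃ (x : V) (q : G.Walk x x), q.edges = p.edges.rotate n := by
  induction n with
  | zero => exact ⟨u, p, by simp⟩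
  | succ n ih =>
    obtain ⟨x, q, hq⟩ := ih
    rw [← List.rotate_rotate, ← hq]
    cases q with
    | nil => exact ⟨x, nil, by simp⟩
    | cons h q => exact ⟨_, q.concat h, by simp [List.rotate_cons_succ]⟩

lemma exists_edges_eq_rotate_succ {u : V} (p : G.Walk u u) (i : Fin p.edges.length) :
    ∃ (x : V) (q : G.Walk x x), q.edges = p.edges.rotate (i + 1) ∧ x ∈ p.edges.get i ∧
      x ∈ p.edges.get ⟨(i + 1) % p.edges.length, Nat.mod_lt _ i.pos⟩ := by
  obtain ⟨x, q, hq⟩ := p.exists_edges_eq_rotate (i + 1)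
  have hne : q.edges ≠ [] := by
    simpa [hq] using List.ne_nil_of_length_pos i.pos
  refine ⟨x, q, hq, ?_, ?_⟩
  · have := Sym2.mem_mk_right q.penultimate x
    rw [← getLast_edges_eq_mk_penultimate_end hne, List.getLast_eq_getElem,
      List.getElem_of_eq hq] at this
    simp only [List.getElem_rotate, hq, List.length_rotate] at this
    have hi : (p.edges.length - 1 + (i + 1)) % p.edges.length = i := by
      rw [show p.edges.length - 1 + (i + 1) = i + p.edges.length by omega, Nat.add_mod_right,
        Nat.mod_eq_of_lt i.isLt]
    simp only [hi] at this
    exact this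
  · have := Sym2.mem_mk_left x q.snd
    rw [← head_edges_eq_mk_start_snd hne, List.head_eq_getElem, List.getElem_of_eq hq] at this
    simpa [List.getElem_rotate] using this

theorem inCommonBlock_of_isChain {v : V} (p : G.Walk v v)
    (hp : p.edges.IsChain fun e f => v ∈ e → v ∈ f → InCommonBlock G e f) {e f : Sym2 V}
    (he : e ∈ p.edges) (hve : v ∈ e) (hf : f ∈ p.edges) (hvf : v ∈ f) : InCommonBlock G e f :=
  (p.inCommonBlock_snd_of_isChain hp he hve).symm.trans (p.inCommonBlock_snd_of_isChain hp hf hvf)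

end SimpleGraph.Walk

theorem stmt5_general {V : Type*} (G : SimpleGraph V) {a : V} (W : G.Walk a a)
    (h : ∀ v : V,
      {i : Fin W.edges.length |
        v ∈ W.edges.get i ∧
        v ∈ W.edges.get ⟨((i : ℕ) + 1) % W.edges.length, Nat.mod_lt _ i.pos⟩ ∧
        ¬ InCommonBlock G (W.edges.get i)
            (W.edges.get ⟨((i : ℕ) + 1) % W.edges.length, Nat.mod_lt _ i.pos⟩)}.Subsingleton) :
    ∀ e ∈ W.edges, ∀ f ∈ W.edges, InCommonBlock G e f := by
  have hstep : ∀ i : Fin W.edges.length, InCommonBlock G (W.edges.get i)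
      (W.edges.get ⟨(i + 1) % W.edges.length, Nat.mod_lt _ i.pos⟩) := by
    intro i
    by_contra hbad
    obtain ⟨c, p, hp, hci, hci'⟩ := W.exists_edges_eq_rotate_succ i
    have hchain : p.edges.IsChain fun e f => c ∈ e → c ∈ f → InCommonBlock G e f :=
      hp ▸ List.isChain_rotate_of_forall_ne i fun j hji hcj hcj' =>
        by_contra fun hj => hji (h c ⟨hcj, hcj', hj⟩ ⟨hci, hci', hbad⟩)
    exact hbad (p.inCommonBlock_of_isChain hchain (by simp [hp]) hci (by simp [hp]) hci')
  have hchain : W.edges.IsChain (InCommonBlock G) := List.isChain_iff_getElem.2 fun k hk => by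
    simpa [Nat.mod_eq_of_lt (show k + 1 < W.length by simpa using hk)] using hstep ⟨k, by omega⟩
  exact fun e he f hf => hchain.pairwise.forall_of_forall (fun _ _ => .refl _) he hf

/-- If `W` is a closed walk such that every vertex admits at most one cyclic position where
the two consecutive edges of `W` meeting there do not lie in a common block, then all edges
of `W` pairwise lie in a common block. -/
theorem stmt5 {V : Type*} [Fintype V] (G : SimpleGraph V) {a : V} (W : G.Walk a a)
    (h : ∀ v : V,
      {i : Fin W.edges.length |
        v ∈ W.edges.get i ∧
        v ∈ W.edges.get ⟨((i : ℕ) + 1) % W.edges.length, Nat.mod_lt _ i.pos⟩ ∧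
        ¬ InCommonBlock G (W.edges.get i)
            (W.edges.get ⟨((i : ℕ) + 1) % W.edges.length, Nat.mod_lt _ i.pos⟩)}.Subsingleton) :
    ∀ e ∈ W.edges, ∀ f ∈ W.edges, InCommonBlock G e f :=
  stmt5_general G W h
end

section
/- Let G be a finite simple graph on vertex set V, let T ⊆ V, and let G' be the graph obtained from G by adding a new vertex s ∉ V adjacent exactly to all vertices of T. Then for every X ⊆ V with X ∩ T = ∅, the following are equivalent: (i) X contains an internal or end vertex of every path of G whose two (distinct) endpoints both lie in T; (ii) every cycle of G' passing through s contains a vertex of X. -/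
/-!
Up to rotation, the cycles of `addApex G T` through the apex `none` are exactly the closed walks
`none → a ⇝ b → none` closing a path `a ⇝ b` of `G` between distinct vertices of `T`
(`addApex.apexCycle`), and such a cycle visits `some x` iff the path visits `x`. So the paths
of the first condition and the cycles of the second correspond, visiting the same vertices of `V`.
-/

open SimpleGraph

/-- The graph obtained from `G` by adding a new apex vertex (the `none` vertex)
adjacent exactly to the vertices of `T`. -/
def addApex {V : Type*} (G : SimpleGraph V) (T : Set V) : SimpleGraph (Option V) where
  Adj a b :=
    match a, b with
    | some x, some y => G.Adj x y
    | some x, none => x ∈ T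
    | none, some y => y ∈ T
    | none, none => False
  symm := by
    constructor
    rintro (_ | x) (_ | y) h
    · exact h.elim
    · exact h
    · exact h
    · exact h.symm
  loopless := by
    constructor
    rintro (_ | x) h
    · exact h.elim
    · exact G.irrefl h

namespace addApex

variable {V : Type*} {G : SimpleGraph V} {T : Set V}

variable (G T) in
@[simps]
def someHom : G →g addApex G T where
  toFun := some
  map_rel' h := h

theorem someHom_injective : Function.Injective (someHom G T) := Option.some_injective V

theorem exists_map_eq_of_none_notMem_support :
    ∀ {a b : V} (w : (addApex G T).Walk (some a) (some b)), none ∉ w.support →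
      ∃ p : G.Walk a b, p.map (someHom G T) = w
  | _, _, .nil, _ => ⟨.nil, rfl⟩
  | _, _, .cons (v := some _) h w, hw => by
    obtain ⟨p, rfl⟩ := exists_map_eq_of_none_notMem_support w (by simp_all)
    exact ⟨.cons h p, rfl⟩
  | _, _, .cons (v := none) _ _, hw => (hw (by simp)).elim

theorem none_notMem_support_map {a b : V} (p : G.Walk a b) :
    none ∉ (p.map (someHom G T)).support := by
  simp [Walk.support_map]

def apexCycle {a b : V} (p : G.Walk a b) (ha : a ∈ T) (hb : b ∈ T) :
    (addApex G T).Walk none none :=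
  -- Adjacencies phrased at `someHom G T _` rather than `some _`, so that they match the
  -- endpoints of `p.map (someHom G T)` syntactically and `rw` with walk lemmas works.
  .cons (show (addApex G T).Adj none (someHom G T a) from ha)
    ((p.map (someHom G T)).concat (show (addApex G T).Adj (someHom G T b) none from hb))

theorem mem_support_apexCycle_some {a b : V} (p : G.Walk a b) (ha : a ∈ T) (hb : b ∈ T)
    (x : V) :
    some x ∈ (apexCycle p ha hb).support ↔ x ∈ p.support := by
  simp [apexCycle, Walk.support_concat, Walk.support_map]

theorem isCycle_apexCycle_iff {a b : V} (p : G.Walk a b) (ha : a ∈ T) (hb : b ∈ T) :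
    (apexCycle p ha hb).IsCycle ↔ p.IsPath ∧ a ≠ b := by
  have hedge : s(none, someHom G T a) ∉ (p.map (someHom G T)).edges := fun h =>
    none_notMem_support_map p (Walk.fst_mem_support_of_mem_edges _ h)
  rw [apexCycle, Walk.cons_isCycle_iff, Walk.concat_isPath_iff,
    Walk.isPath_map_iff_of_injective someHom_injective, Walk.edges_concat]
  simp only [List.concat_eq_append, List.mem_append, hedge, none_notMem_support_map,
    not_false_eq_true, and_true, false_or]
  simp [eq_comm]

theorem exists_apexCycle_eq :
    ∀ c : (addApex G T).Walk none none, c.IsCycle →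
      ∃ (a b : V) (p : G.Walk a b) (ha : a ∈ T) (hb : b ∈ T), apexCycle p ha hb = c
  | .nil, hc => absurd rfl hc.ne_nil
  | .cons (v := none) h _, _ => absurd h (addApex G T).irrefl
  | .cons (v := some a) h (.cons h₁ q), hc => by
    obtain ⟨_ | b, r, h', hr⟩ := Walk.exists_cons_eq_concat h₁ q
    · exact absurd h' (addApex G T).irrefl
    rw [hr, Walk.cons_isCycle_iff, Walk.concat_isPath_iff] at hc
    obtain ⟨p, rfl⟩ := exists_map_eq_of_none_notMem_support r hc.1.2
    exact ⟨a, b, p, h, h', hr ▸ rfl⟩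

end addApex

theorem stmt7_general {V : Type*} (G : SimpleGraph V) (T : Set V)
    (X : Set V) :
    (∀ (a b : V) (p : G.Walk a b), p.IsPath → a ≠ b → a ∈ T → b ∈ T →
        ∃ x ∈ X, x ∈ p.support) ↔
    (∀ (a : Option V) (c : (addApex G T).Walk a a), c.IsCycle →
        (none : Option V) ∈ c.support → ∃ x ∈ X, some x ∈ c.support) := by
  constructor
  · classical
    intro hX _ c hc hs
    obtain ⟨a, b, p, ha, hb, hp⟩ := addApex.exists_apexCycle_eq _ (hc.rotate hs)
    obtain ⟨hpath, hab⟩ := (addApex.isCycle_apexCycle_iff p ha hb).1 (hp ▸ hc.rotate hs)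
    obtain ⟨x, hxX, hx⟩ := hX a b p hpath hab ha hb
    refine ⟨x, hxX, (c.mem_support_rotate_iff none hs).1 ?_⟩
    rwa [← hp, addApex.mem_support_apexCycle_some]
  · intro hX a b p hp hab ha hb
    obtain ⟨x, hxX, hx⟩ := hX none (addApex.apexCycle p ha hb)
      ((addApex.isCycle_apexCycle_iff p ha hb).2 ⟨hp, hab⟩) (Walk.start_mem_support _)
    exact ⟨x, hxX, (addApex.mem_support_apexCycle_some p ha hb x).1 hx⟩

/-- For `X ⊆ V` with `X ∩ T = ∅`: `X` hits every path of `G` whose two distinct endpoints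
lie in `T` iff every cycle of `G'` (obtained by adding an apex `s` adjacent to `T`)
through `s` contains a vertex of `X`. -/
theorem stmt7 {V : Type*} [Fintype V] (G : SimpleGraph V) (T : Set V)
    (X : Set V) (hXT : X ∩ T = ∅) :
    (∀ (a b : V) (p : G.Walk a b), p.IsPath → a ≠ b → a ∈ T → b ∈ T →
        ∃ x ∈ X, x ∈ p.support) ↔
    (∀ (a : Option V) (c : (addApex G T).Walk a a), c.IsCycle →
        (none : Option V) ∈ c.support → ∃ x ∈ X, some x ∈ c.support) :=
  stmt7_general G T X
end

section
/- Let A(u,v) be the arrow graph. Then {a1, a3} is an odd cycle transversal of A(u,v), every odd cycle transversal of A(u,v) has size at least 2, and {a1, a3} is the unique odd cycle transversal of A(u,v) of size 2. -/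
open SimpleGraph

/-- The nine vertices of the arrow graph `A(u,v)`. -/
inductive ArrowV : Type
  | u | a1 | a2 | a3 | v | b1 | b2 | b3 | b4
  deriving DecidableEq

instance : Fintype ArrowV where
  elems := {ArrowV.u, ArrowV.a1, ArrowV.a2, ArrowV.a3, ArrowV.v, ArrowV.b1, ArrowV.b2,
    ArrowV.b3, ArrowV.b4}
  complete := by intro x; cases x <;> decide

/-- The arrow graph `A(u,v)`, with edges
`u a1, a1 a2, a2 a3, a3 v, u b1, b1 a1, a1 b2, b2 a2, a2 b3, b3 a3, a3 b4, b4 v`. -/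
def arrowGraph : SimpleGraph ArrowV :=
  SimpleGraph.fromRel (fun x y =>
    (x, y) ∈ ([(ArrowV.u, ArrowV.a1), (ArrowV.a1, ArrowV.a2), (ArrowV.a2, ArrowV.a3),
      (ArrowV.a3, ArrowV.v), (ArrowV.u, ArrowV.b1), (ArrowV.b1, ArrowV.a1),
      (ArrowV.a1, ArrowV.b2), (ArrowV.b2, ArrowV.a2), (ArrowV.a2, ArrowV.b3),
      (ArrowV.b3, ArrowV.a3), (ArrowV.a3, ArrowV.b4), (ArrowV.b4, ArrowV.v)] :
        List (ArrowV × ArrowV)))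

/-- `X` is an odd cycle transversal of `H`: the graph `H − X` contains no odd cycle. -/
def IsOCT {W : Type*} (H : SimpleGraph W) (X : Set W) : Prop :=
  ∀ (a : ↥Xᶜ) (c : (H.induce Xᶜ).Walk a a), c.IsCycle → ¬ Odd c.length

/-!
Deleting `a1` and `a3` leaves a bipartite graph, with `b1`, `a2`, `v` on one side.
Conversely, `A(u,v)` is a chain of the four triangles `u b1 a1`, `a1 b2 a2`, `a2 b3 a3`,
`a3 b4 v`, and an odd cycle transversal meets each of them. The first and third are disjoint,
so it has at least two vertices; if exactly two, one lies in each of these triangles, and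
then meeting the fourth triangle forces `a3`, after which meeting the second forces `a1`.
-/

section OddCycleTransversal

variable {W : Type*} {H : SimpleGraph W} {X : Set W}

theorem isOCT_of_colorable_two (h : (H.induce Xᶜ).Colorable 2) : IsOCT H X :=
  fun a c _ hodd => Nat.not_odd_iff_even.2 (two_colorable_iff_forall_loop_even.1 h a c) hodd

theorem IsOCT.mem_or_mem_or_mem_of_adj (hX : IsOCT H X) {x y z : W}
    (hxy : H.Adj x y) (hxz : H.Adj x z) (hyz : H.Adj y z) : x ∈ X ∨ y ∈ X ∨ z ∈ X := by
  classical
  by_contra! hxyz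
  obtain ⟨hx, hy, hz⟩ := hxyz
  have htriangle : (H.induce Xᶜ).IsNClique 3 {⟨x, hx⟩, ⟨y, hy⟩, ⟨z, hz⟩} :=
    is3Clique_triple_iff.2 ⟨hxy, hxz, hyz⟩
  obtain ⟨a, c, hc, hlen⟩ := is3Clique_iff_exists_cycle_length_three.1 ⟨_, htriangle⟩
  exact hX a c hc (hlen ▸ by decide)

end OddCycleTransversal

instance : DecidableRel arrowGraph.Adj := fun x y => by
  unfold arrowGraph; rw [fromRel_adj]; infer_instance

def arrowSide : ArrowV → Fin 2
  | .b1 | .a2 | .v => 1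
  | _ => 0

theorem arrowSide_ne_of_adj :
    ∀ x y : ArrowV, arrowGraph.Adj x y → x ∉ ({.a1, .a3} : Set ArrowV) →
      y ∉ ({.a1, .a3} : Set ArrowV) → arrowSide x ≠ arrowSide y := by
  simp only [Set.mem_insert_iff, Set.mem_singleton_iff]
  decide

theorem isOCT_arrowGraph_a1_a3 : IsOCT arrowGraph {.a1, .a3} :=
  isOCT_of_colorable_two
    ⟨Coloring.mk (fun x => arrowSide x.1) fun {x y} h => arrowSide_ne_of_adj x y h x.2 y.2⟩

theorem IsOCT.arrowGraph_triangles {X : Set ArrowV} (hX : IsOCT arrowGraph X) :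
    (.u ∈ X ∨ .b1 ∈ X ∨ .a1 ∈ X) ∧ (.a1 ∈ X ∨ .b2 ∈ X ∨ .a2 ∈ X) ∧
    (.a2 ∈ X ∨ .b3 ∈ X ∨ .a3 ∈ X) ∧ (.a3 ∈ X ∨ .b4 ∈ X ∨ .v ∈ X) := by
  refine ⟨?_, ?_, ?_, ?_⟩ <;> exact hX.mem_or_mem_or_mem_of_adj (by decide) (by decide) (by decide)

theorem IsOCT.arrowGraph_exists_mem_ne {X : Set ArrowV} (hX : IsOCT arrowGraph X) :
    ∃ p ∈ X, ∃ q ∈ X, p ≠ q ∧ (p = .u ∨ p = .b1 ∨ p = .a1) ∧ (q = .a2 ∨ q = .b3 ∨ q = .a3) := by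
  obtain ⟨h1, -, h3, -⟩ := hX.arrowGraph_triangles
  rcases h1 with hp | hp | hp <;> rcases h3 with hq | hq | hq <;>
    exact ⟨_, hp, _, hq, by decide, by simp, by simp⟩

/-- `{a1, a3}` is an OCT of the arrow graph, every OCT of the arrow graph has size at
least 2, and `{a1, a3}` is the unique OCT of size 2. -/
theorem stmt10 :
    IsOCT arrowGraph {ArrowV.a1, ArrowV.a3} ∧
    (∀ X : Set ArrowV, IsOCT arrowGraph X → 2 ≤ X.ncard) ∧
    (∀ X : Set ArrowV, IsOCT arrowGraph X → X.ncard = 2 →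
      X = {ArrowV.a1, ArrowV.a3}) := by
  refine ⟨isOCT_arrowGraph_a1_a3, fun X hX => ?_, fun X hX hcard => ?_⟩
  · obtain ⟨p, hp, q, hq, hpq, -⟩ := hX.arrowGraph_exists_mem_ne
    exact (Set.one_lt_ncard_iff X.toFinite).2 ⟨p, q, hp, hq, hpq⟩
  · obtain ⟨p, hp, q, hq, hpq, hp1, hq3⟩ := hX.arrowGraph_exists_mem_ne
    have hX_eq : X = {p, q} :=
      (Set.eq_of_subset_of_ncard_le (Set.insert_subset hp (Set.singleton_subset_iff.2 hq))
        (by rw [hcard, Set.ncard_pair hpq]) X.toFinite).symm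
    obtain ⟨-, h2, -, h4⟩ := hX.arrowGraph_triangles
    subst hX_eq
    rcases hp1 with rfl | rfl | rfl <;> rcases hq3 with rfl | rfl | rfl <;> simp_all
end

section
/- Let A(u,v) be the arrow graph and let H = A(u,v) − u. Then every odd cycle transversal of H that contains v and has size exactly 2 equals {a2, v}. -/
open SimpleGraph

/-- The arrow graph with the vertex `u` deleted. -/
def arrowDelU : SimpleGraph ↥{w : ArrowV | w ≠ ArrowV.u} :=
  arrowGraph.induce {w : ArrowV | w ≠ ArrowV.u}

theorem IsOCT.mem_or_mem_or_mem_of_adj_s12 {W : Type*} {H : SimpleGraph W} {X : Set W}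
    (hX : IsOCT H X) {a b c : W} (hab : H.Adj a b) (hac : H.Adj a c) (hbc : H.Adj b c) :
    a ∈ X ∨ b ∈ X ∨ c ∈ X := by
  classical
  by_contra! ⟨ha, hb, hc⟩
  have htriangle : (H.induce Xᶜ).IsNClique 3 {⟨a, ha⟩, ⟨b, hb⟩, ⟨c, hc⟩} :=
    is3Clique_triple_iff.mpr ⟨hab, hac, hbc⟩
  obtain ⟨x, w, hw, hlen⟩ := is3Clique_iff_exists_cycle_length_three.mp ⟨_, htriangle⟩
  exact hX x w hw (hlen ▸ by decide)

abbrev ArrowV.toDelU (w : ArrowV) (hw : w ≠ ArrowV.u := by decide) :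
    ↥{w : ArrowV | w ≠ ArrowV.u} :=
  ⟨w, hw⟩

open ArrowV in
/-- Every OCT of `A(u,v) − u` that contains `v` and has size exactly 2 equals `{a2, v}`. -/
theorem stmt12 (X : Set ↥{w : ArrowV | w ≠ ArrowV.u})
    (hX : IsOCT arrowDelU X)
    (hv : (⟨ArrowV.v, by simp⟩ : ↥{w : ArrowV | w ≠ ArrowV.u}) ∈ X)
    (hcard : X.ncard = 2) :
    X = {(⟨ArrowV.a2, by simp⟩ : ↥{w : ArrowV | w ≠ ArrowV.u}), ⟨ArrowV.v, by simp⟩} := by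
  -- `X` must meet the triangles `a1 b2 a2` and `a2 b3 a3`, which share only `a2` and avoid `v`.
  have ha2 : a2.toDelU ∈ X := by
    by_contra ha2
    have h₁ := hX.mem_or_mem_or_mem_of_adj_s12 (a := a1.toDelU) (b := b2.toDelU) (c := a2.toDelU)
      (by simp [arrowDelU, arrowGraph]) (by simp [arrowDelU, arrowGraph])
      (by simp [arrowDelU, arrowGraph])
    have h₂ := hX.mem_or_mem_or_mem_of_adj_s12 (a := b3.toDelU) (b := a3.toDelU) (c := a2.toDelU)
      (by simp [arrowDelU, arrowGraph]) (by simp [arrowDelU, arrowGraph])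
      (by simp [arrowDelU, arrowGraph])
    simp only [ha2, or_false] at h₁ h₂
    suffices 2 < X.ncard by omega
    rcases h₁ with h₁ | h₁ <;> rcases h₂ with h₂ | h₂ <;>
      exact (Set.two_lt_ncard_iff X.toFinite).mpr
        ⟨_, _, _, hv, h₁, h₂, by decide, by decide, by decide⟩
  exact (Set.eq_of_subset_of_ncard_le (Set.pair_subset ha2 hv)
    (by rw [hcard, Set.ncard_pair (by decide)]) X.toFinite).symm
end

section
/- Let G be a 2-connected finite simple graph on vertex set V with |V| ≥ 3, and let S ⊆ V be nonempty. Suppose that every vertex of S has degree exactly 2 in G, every connected component of G − S is bipartite, for every connected component A of G − S exactly two edges of G have exactly one endpoint in A, and some S-cycle of G has odd length. Then every S-cycle of G has odd length. -/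
/-!
Colour every component of `G − S` properly by `f : V → ZMod 2`. Along a closed walk the
terms `f x + f y` of its edges `xy` telescope to `0`, so the length of a cycle is congruent
to the sum of `1 + f x + f y` over its edges, and the edges avoiding `S` contribute `0`.
It therefore suffices that every `S`-cycle `c` contains every edge at `S`, for then all
`S`-cycles have the same parity.

A closed trail crosses the boundary of a vertex set an even number of times, so once `c`
meets a component of `G − S`, whose boundary has only two edges, it uses both of them.
Together with the degree-two condition on `S`, this makes the set of vertices lying on `c`
or in a component of `G − S` met by `c` closed under adjacency; by connectivity it is `V`.
-/

open SimpleGraph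

namespace SimpleGraph

variable {V : Type*} {G : SimpleGraph V}

theorem Reachable.mem_of_adj_closed {X : Set V} (hX : ∀ ⦃u v⦄, G.Adj u v → u ∈ X → v ∈ X)
    {u v : V} (huv : G.Reachable u v) (hu : u ∈ X) : v ∈ X := by
  obtain ⟨p⟩ := huv
  induction p with
  | nil => exact hu
  | cons h _ ih => exact ih (hX h hu)

theorem Walk.IsCycle.incidenceSet_subset_edges {a v : V} [Fintype (G.neighborSet v)]
    {c : G.Walk a a} (hc : c.IsCycle) (hv : v ∈ c.support) (hdeg : G.degree v = 2) :
    G.incidenceSet v ⊆ {e | e ∈ c.edges} := by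
  have hnbr : c.toSubgraph.neighborSet v = G.neighborSet v := by
    refine Set.eq_of_subset_of_ncard_le (c.toSubgraph.neighborSet_subset v) ?_ (Set.toFinite _)
    rw [hc.ncard_neighborSet_toSubgraph_eq_two hv, ← Nat.card_coe_set_eq,
      Nat.card_eq_fintype_card, card_neighborSet_eq_degree, hdeg]
  rintro e ⟨he, hve⟩
  obtain ⟨w, rfl⟩ := Sym2.mem_iff_exists.mp hve
  have : c.toSubgraph.Adj v w := by
    rw [← Subgraph.mem_neighborSet, hnbr]
    exact he
  exact c.mem_edges_toSubgraph.mp this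

def edgeBoundary (G : SimpleGraph V) (A : Set V) : Set (Sym2 V) :=
  {e ∈ G.edgeSet | ∃ x y : V, e = s(x, y) ∧ x ∈ A ∧ y ∉ A}

theorem mk_mem_edgeBoundary_iff {A : Set V} {x y : V} :
    s(x, y) ∈ G.edgeBoundary A ↔ G.Adj x y ∧ (x ∈ A ↔ y ∉ A) := by
  constructor
  · rintro ⟨hxy, x', y', heq, hx', hy'⟩
    refine ⟨hxy, ?_⟩
    rcases Sym2.eq_iff.mp heq with ⟨rfl, rfl⟩ | ⟨rfl, rfl⟩ <;> tauto
  · rintro ⟨hxy, hA⟩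
    by_cases hx : x ∈ A
    · exact ⟨hxy, x, y, rfl, hx, hA.mp hx⟩
    · exact ⟨hxy, y, x, Sym2.eq_swap, not_not.mp (mt hA.mpr hx), hx⟩

theorem Walk.exists_mem_edges_edgeBoundary {A : Set V} {u v : V} (p : G.Walk u v) (hu : u ∈ A)
    (hv : v ∉ A) : ∃ e ∈ p.edges, e ∈ G.edgeBoundary A := by
  obtain ⟨d, hd, hdA, hdA'⟩ := p.exists_boundary_dart A hu hv
  exact ⟨d.edge, List.mem_map_of_mem hd, d.edge_mem, d.fst, d.snd, rfl, hdA, hdA'⟩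

def endpointSum (f : V → ZMod 2) : Sym2 V → ZMod 2 :=
  Sym2.lift ⟨fun u v => f u + f v, fun _ _ => add_comm _ _⟩

@[simp]
theorem endpointSum_mk (f : V → ZMod 2) (u v : V) : endpointSum f s(u, v) = f u + f v := rfl

theorem Walk.sum_map_edges_endpointSum (f : V → ZMod 2) {u v : V} (p : G.Walk u v) :
    (p.edges.map (endpointSum f)).sum = f u + f v := by
  induction p with
  | nil => simp [CharTwo.add_self_eq_zero]
  | cons _ _ ih =>
    simp only [Walk.edges_cons, List.map_cons, List.sum_cons, ih, endpointSum_mk]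
    grind

open Classical in
theorem endpointSum_indicator_one {A : Set V} {e : Sym2 V} (he : e ∈ G.edgeSet) :
    endpointSum (A.indicator 1) e = if e ∈ G.edgeBoundary A then 1 else 0 := by
  induction e using Sym2.ind with
  | _ x y =>
    have hxy : G.Adj x y := he
    by_cases hx : x ∈ A <;> by_cases hy : y ∈ A <;>
      simp [mk_mem_edgeBoundary_iff, hxy, hx, hy, CharTwo.add_self_eq_zero]

theorem Walk.IsTrail.even_ncard_edges_inter_edgeBoundary {a : V} {c : G.Walk a a}
    (hc : c.IsTrail) (A : Set V) : Even ({e | e ∈ c.edges} ∩ G.edgeBoundary A).ncard := by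
  classical
  have hset : {e | e ∈ c.edges} ∩ G.edgeBoundary A =
      ↑(c.edges.toFinset.filter (· ∈ G.edgeBoundary A)) := by
    ext e
    simp
  have hsum : ∑ e ∈ c.edges.toFinset, endpointSum (A.indicator 1) e =
      ∑ e ∈ c.edges.toFinset, if e ∈ G.edgeBoundary A then 1 else 0 :=
    Finset.sum_congr rfl fun e he =>
      endpointSum_indicator_one (c.edges_subset_edgeSet (List.mem_toFinset.mp he))
  rw [hset, Set.ncard_coe_finset, ← ZMod.natCast_eq_zero_iff_even, ← Finset.sum_boole, ← hsum,
    List.sum_toFinset _ hc.edges_nodup, c.sum_map_edges_endpointSum, CharTwo.add_self_eq_zero]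

theorem Walk.IsTrail.edgeBoundary_subset_edges {A : Set V} {a x y : V} {c : G.Walk a a}
    (hc : c.IsTrail) (hx : x ∈ c.support) (hxA : x ∈ A) (hy : y ∈ c.support) (hyA : y ∉ A)
    (hA : (G.edgeBoundary A).ncard = 2) : G.edgeBoundary A ⊆ {e | e ∈ c.edges} := by
  classical
  set T := {e | e ∈ c.edges} ∩ G.edgeBoundary A
  have hfin : (G.edgeBoundary A).Finite := Set.finite_of_ncard_pos (by omega)
  have hT_le : T.ncard ≤ 2 := hA ▸ Set.ncard_le_ncard Set.inter_subset_right hfin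
  have hT_pos : 0 < T.ncard := by
    obtain ⟨e, he, heA⟩ :=
      ((c.dropUntil x hx).append (c.takeUntil y hy)).exists_mem_edges_edgeBoundary hxA hyA
    have he' : e ∈ c.edges := by
      rcases List.mem_append.mp (Walk.edges_append _ _ ▸ he) with he | he
      · exact c.edges_dropUntil_subset_edges hx he
      · exact c.edges_takeUntil_subset_edges hy he
    exact (Set.ncard_pos (hfin.subset Set.inter_subset_right)).mpr ⟨e, he', heA⟩
  have hT : T.ncard = 2 := by
    obtain ⟨k, hk⟩ : Even T.ncard := hc.even_ncard_edges_inter_edgeBoundary A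
    omega
  rw [← Set.eq_of_subset_of_ncard_le Set.inter_subset_right (hA ▸ hT.ge) hfin]
  exact Set.inter_subset_left

theorem Walk.IsCycle.subset_support [G.LocallyFinite] {S : Set V}
    (hconn : G.Connected) (hdeg : ∀ w ∈ S, G.degree w = 2)
    (hout : ∀ C : (G.induce Sᶜ).ConnectedComponent,
      (G.edgeBoundary (Subtype.val '' C.supp)).ncard = 2)
    {a s : V} {c : G.Walk a a} (hc : c.IsCycle) (hs : s ∈ S) (hsc : s ∈ c.support) :
    S ⊆ {v | v ∈ c.support} := by
  set X : Set V := {v | v ∈ c.support ∨ ∃ u ∈ c.support, ∃ (hu : u ∉ S) (hv : v ∉ S),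
    (G.induce Sᶜ).Reachable ⟨u, hu⟩ ⟨v, hv⟩}
  have mem_support_of_mem_X : ∀ v ∈ S, v ∈ X → v ∈ c.support := by
    rintro v hv (hvc | ⟨_, _, _, hv', _⟩)
    exacts [hvc, absurd hv hv']
  have hX : ∀ ⦃u v⦄, G.Adj u v → u ∈ X → v ∈ X := by
    intro u v huv hu
    by_cases huS : u ∈ S
    · exact .inl <| c.snd_mem_support_of_mem_edges <| hc.incidenceSet_subset_edges
        (mem_support_of_mem_X u huS hu) (hdeg u huS) ⟨huv, Sym2.mem_mk_left _ _⟩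
    obtain ⟨u₀, hu₀c, hu₀S, hreach⟩ : ∃ u₀ ∈ c.support, ∃ hu₀ : u₀ ∉ S,
        (G.induce Sᶜ).Reachable ⟨u₀, hu₀⟩ ⟨u, huS⟩ := by
      rcases hu with hu | ⟨u₀, hu₀c, hu₀S, _, hreach⟩
      exacts [⟨u, hu, huS, .rfl⟩, ⟨u₀, hu₀c, hu₀S, hreach⟩]
    by_cases hvS : v ∈ S
    · -- `c` enters and leaves the component of `u₀`, so it uses both of its boundary edges
      set A := Subtype.val '' ((G.induce Sᶜ).connectedComponentMk ⟨u₀, hu₀S⟩).supp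
      have hAS : ∀ x ∈ A, x ∉ S := by
        rintro _ ⟨⟨x, hx⟩, _, rfl⟩
        exact hx
      have huA : u ∈ A := ⟨⟨u, huS⟩, (ConnectedComponent.sound hreach).symm, rfl⟩
      have hboundary := hc.isTrail.edgeBoundary_subset_edges (A := A) hu₀c
        ⟨⟨u₀, hu₀S⟩, rfl, rfl⟩ hsc (fun hsA => hAS s hsA hs) (hout _)
      exact .inl <| c.snd_mem_support_of_mem_edges <|
        hboundary ⟨huv, u, v, rfl, huA, fun hvA => hAS v hvA hvS⟩
    · exact .inr ⟨u₀, hu₀c, hu₀S, hvS, hreach.trans (Adj.reachable huv)⟩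
  exact fun v hv => mem_support_of_mem_X v hv <|
    (hconn.preconnected s v).mem_of_adj_closed hX (.inl hsc)

theorem Walk.IsTrail.natCast_length_eq_finsum {S : Set V} {f : V → ZMod 2}
    (hf : ∀ u v, G.Adj u v → u ∉ S → v ∉ S → f u ≠ f v) {a : V} {c : G.Walk a a}
    (hc : c.IsTrail) (hS : ⋃ v ∈ S, G.incidenceSet v ⊆ {e | e ∈ c.edges}) :
    (c.length : ZMod 2) = ∑ᶠ e ∈ ⋃ v ∈ S, G.incidenceSet v, (1 + endpointSum f e) := by
  classical
  have hlen : (c.length : ZMod 2) = ∑ e ∈ c.edges.toFinset, (1 + endpointSum f e) := by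
    rw [List.sum_toFinset _ hc.edges_nodup, List.sum_map_add, c.sum_map_edges_endpointSum,
      CharTwo.add_self_eq_zero, add_zero, List.map_const', List.sum_replicate, c.length_edges,
      nsmul_one]
  rw [hlen, finsum_mem_eq_sum_of_inter_support_eq]
  ext e
  simp only [Set.mem_inter_iff, Function.mem_support, Finset.mem_coe, List.mem_toFinset]
  refine ⟨fun ⟨he, h0⟩ => ⟨hS he, h0⟩, fun ⟨he, h0⟩ => ⟨?_, h0⟩⟩
  by_contra heS
  induction e using Sym2.ind with
  | _ x y =>
    have hxy : G.Adj x y := c.edges_subset_edgeSet he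
    simp only [Set.mem_iUnion, mk'_mem_incidenceSet_iff, hxy, true_and, not_exists] at heS
    have hne := hf x y hxy (fun hx => heS x hx (.inl rfl)) (fun hy => heS y hy (.inr rfl))
    have one_add_add_of_ne : ∀ p q : ZMod 2, p ≠ q → 1 + (p + q) = 0 := by decide
    exact h0 (one_add_add_of_ne _ _ hne)

theorem exists_zmod_two_coloring_of_colorable_induce_compl {S : Set V}
    (h : (G.induce Sᶜ).Colorable 2) :
    ∃ f : V → ZMod 2, ∀ u v, G.Adj u v → u ∉ S → v ∉ S → f u ≠ f v := by
  classical
  let C : (G.induce Sᶜ).Coloring (ZMod 2) := h.toColoring (by simp)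
  refine ⟨fun v => if hv : v ∈ S then 0 else C ⟨v, hv⟩, fun u v huv hu hv => ?_⟩
  simpa [hu, hv] using C.valid (show (G.induce Sᶜ).Adj ⟨u, hu⟩ ⟨v, hv⟩ from huv)

end SimpleGraph

theorem stmt16_general {V : Type*} [Fintype V] (G : SimpleGraph V) [DecidableRel G.Adj]
    (hG : TwoConnected G) (S : Set V)
    (hdeg : ∀ w ∈ S, G.degree w = 2)
    (hbip : ∀ C : (G.induce Sᶜ).ConnectedComponent,
      ((G.induce Sᶜ).induce C.supp).Colorable 2)
    (hout : ∀ C : (G.induce Sᶜ).ConnectedComponent,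
      {e ∈ G.edgeSet | ∃ x y : V, e = s(x, y) ∧
        x ∈ Subtype.val '' C.supp ∧ y ∉ Subtype.val '' C.supp}.ncard = 2)
    (hodd : ∃ (a : V) (c : G.Walk a a), c.IsCycle ∧ Odd c.length ∧ ∃ w ∈ S, w ∈ c.support) :
    ∀ (a : V) (c : G.Walk a a), c.IsCycle → (∃ w ∈ S, w ∈ c.support) → Odd c.length := by
  obtain ⟨f, hf⟩ := exists_zmod_two_coloring_of_colorable_induce_compl
    (colorable_iff_forall_connectedComponent.mpr hbip)
  have hparity : ∀ (a : V) (c : G.Walk a a), c.IsCycle → (∃ w ∈ S, w ∈ c.support) →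
      (c.length : ZMod 2) = ∑ᶠ e ∈ ⋃ v ∈ S, G.incidenceSet v, (1 + endpointSum f e) := by
    rintro a c hc ⟨s, hs, hsc⟩
    have hsupp := hc.subset_support hG.2.1 hdeg hout hs hsc
    refine hc.isTrail.natCast_length_eq_finsum hf (Set.iUnion₂_subset fun v hv => ?_)
    exact hc.incidenceSet_subset_edges (hsupp hv) (hdeg v hv)
  obtain ⟨a₀, c₀, hc₀, hodd₀, hc₀S⟩ := hodd
  intro a c hc hcS
  rw [← ZMod.natCast_eq_one_iff_odd] at hodd₀ ⊢
  rw [hparity a c hc hcS, ← hparity a₀ c₀ hc₀ hc₀S, hodd₀]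

/-- Suppose `G` is 2-connected, `S ≠ ∅`, every vertex of `S` has degree exactly 2,
every connected component of `G − S` is bipartite, every connected component of `G − S`
has exactly two edges of `G` leaving it, and some `S`-cycle is odd. Then every `S`-cycle
of `G` is odd. -/
theorem stmt16 {V : Type*} [Fintype V] (G : SimpleGraph V) [DecidableRel G.Adj]
    (hG : TwoConnected G) (S : Set V) (hS : S.Nonempty)
    (hdeg : ∀ w ∈ S, G.degree w = 2)
    (hbip : ∀ C : (G.induce Sᶜ).ConnectedComponent,
      ((G.induce Sᶜ).induce C.supp).Colorable 2)
    (hout : ∀ C : (G.induce Sᶜ).ConnectedComponent,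
      {e ∈ G.edgeSet | ∃ x y : V, e = s(x, y) ∧
        x ∈ Subtype.val '' C.supp ∧ y ∉ Subtype.val '' C.supp}.ncard = 2)
    (hodd : ∃ (a : V) (c : G.Walk a a), c.IsCycle ∧ Odd c.length ∧ ∃ w ∈ S, w ∈ c.support) :
    ∀ (a : V) (c : G.Walk a a), c.IsCycle → (∃ w ∈ S, w ∈ c.support) → Odd c.length :=
  stmt16_general G hG S hdeg hbip hout hodd
end
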